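/- Let 2 ≤ p < 3 and let x, x̃ be solutions of x_{k+1} = x_k + Σ_μ f_μ(x_k)(w^μ_{k+1} − w^μ_k) driven by time series w and w̃ respectively, with f = (f_1, ..., f_d) of class C³_b. Define I_{k,l} := (x_l − x_k) − Σ_μ f_μ(x_k)(w^μ_l − w^μ_k), J^μ_{k,l} := f_μ(x_l) − f_μ(x_k) − Σ_ν Df_μ(x_k) f_ν(x_k)(w^ν_l − w^ν_k), and Ĩ, J̃^μ analogously for x̃, w̃. Then for all 0 ≤ k < l ≤ N: max_{μ=1,...,d} ||J^μ − J̃^μ||_{p/2;[k,l]} ≤ 2^{2−4/p} ||f||_{C³_b} { ||I − Ĩ||_{p/2;[k,l]} + ||x − x̃||_{∞;[0,l]} ( ||Ĩ||_{p/2;[k,l]} + ||x̃||²_{p;[k,l]} ) + ||x − x̃||_{p;[k,l]} ( ||x||_{p;[k,l]} + ||x̃||_{p;[k,l]} ) }, where ||y||_{∞;[0,l]} := max_{j=0,...,l} |y_j|. -/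

import Mathlib

/-!
Write `J_{k,l} = [f(x_l) - f(x_k) - Df(x_k)(x_l - x_k)] + Df(x_k) I_{k,l}`. Then `J - J̃` is the
difference of two second-order Taylor remainders plus `Df(x_k)(I - Ĩ) + (Df(x_k) - Df(x̃_k)) Ĩ`.
The mean value theorem along the segments from `x_k` to `x_l` and from `x̃_k` to `x̃_l` bounds the
Taylor part by `‖f‖_{C³_b} (|δ(x - x̃)| (|δx| + |δx̃|) + ‖x - x̃‖_∞ |δx̃|²)`, so each increment of
`J - J̃` is controlled pointwise. On a partition, Minkowski's inequality in `ℓ^{p/2}` and Hölder's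
inequality with exponents `(p, p)` turn this into the stated bound, already with constant
`1 ≤ 2^{2 - 4/p}`.
-/

noncomputable section

/-- `s` is an increasing subsequence (partition) of `{k, …, l}` from `k` to `l`. -/
def IsPart (k l : ℕ) (s : List ℕ) : Prop :=
  s.Chain' (· < ·) ∧ s.head? = some k ∧ s.getLast? = some l

/-- Supremum over partitions of the sums of `p`-th powers of increments of a triangular array. -/
def pVarSum {E : Type*} [NormedAddCommGroup E] (p : ℝ) (Ξ : ℕ → ℕ → E) (k l : ℕ) : ℝ :=
  sSup { x : ℝ | ∃ s : List ℕ, IsPart k l s ∧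
    x = ((s.zip s.tail).map fun ab => ‖Ξ ab.1 ab.2‖ ^ p).sum }

/-- The `p`-variation of a triangular array over `[k,l]`. -/
def pVar {E : Type*} [NormedAddCommGroup E] (p : ℝ) (Ξ : ℕ → ℕ → E) (k l : ℕ) : ℝ :=
  pVarSum p Ξ k l ^ (1 / p)

/-- The `p`-variation of a time series over `[k,l]`. -/
def pVarSeq {E : Type*} [NormedAddCommGroup E] (p : ℝ) (x : ℕ → E) (k l : ℕ) : ℝ :=
  pVar p (fun a b => x b - x a) k l

/-- A discrete control on `{0, …, N}`: nonnegative, vanishing on the diagonal, superadditive. -/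
def IsControl (N : ℕ) (ω : ℕ → ℕ → ℝ) : Prop :=
  (∀ k l, k ≤ l → l ≤ N → 0 ≤ ω k l) ∧
  (∀ k, k ≤ N → ω k k = 0) ∧
  (∀ k l m, k < l → l < m → m ≤ N → ω k l + ω l m ≤ ω k m)

/-- The `C³_b` norm of a family of vector fields: `max_μ max_{k=1,2,3} sup ‖D^k f_μ‖`. -/
def C3bNormF {d n : ℕ} (f : Fin d → (Fin n → ℝ) → (Fin n → ℝ)) : ℝ :=
  max (⨆ μ, ⨆ y, ‖iteratedFDeriv ℝ 1 (f μ) y‖)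
    (max (⨆ μ, ⨆ y, ‖iteratedFDeriv ℝ 2 (f μ) y‖)
      (⨆ μ, ⨆ y, ‖iteratedFDeriv ℝ 3 (f μ) y‖))

open Finset

namespace IsPart

variable {k l : ℕ} {s : List ℕ}

theorem pairwise_lt (hs : IsPart k l s) : s.Pairwise (· < ·) :=
  List.isChain_iff_pairwise.mp hs.1

theorem le_of_mem (hs : IsPart k l s) {a : ℕ} (ha : a ∈ s) : a ≤ l := by
  have hlast : s.getLast (List.ne_nil_of_mem ha) = l :=
    Option.some_injective _ ((List.getLast?_eq_some_getLast _).symm.trans hs.2.2)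
  exact hlast ▸ (hs.pairwise_lt.imp le_of_lt).rel_getLast ha

theorem getD_le (hs : IsPart k l s) (i : ℕ) : s.getD i 0 ≤ l := by
  rw [List.getD_eq_getElem?_getD]
  cases h : s[i]? with
  | none => simp
  | some a => exact hs.le_of_mem (List.mem_of_getElem? h)

theorem length_le (hs : IsPart k l s) : s.length ≤ l + 1 := by
  have hsub : s ⊆ List.range (l + 1) := fun a ha =>
    List.mem_range.2 (Nat.lt_succ_of_le (hs.le_of_mem ha))
  simpa using (hs.pairwise_lt.nodup.subperm hsub).length_le

end IsPart

theorem List.sum_map_zip_tail_eq_sum_range {α M : Type*} [AddCommMonoid M] (g : α → α → M)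
    (d : α) (s : List α) :
    ((s.zip s.tail).map fun ab => g ab.1 ab.2).sum =
      ∑ i ∈ Finset.range (s.length - 1), g (s.getD i d) (s.getD (i + 1) d) := by
  induction s with
  | nil => simp
  | cons a t ih =>
    cases t with
    | nil => simp
    | cons b t =>
      simp only [List.zip_cons_cons, List.tail_cons, List.map_cons, List.sum_cons] at ih ⊢
      rw [ih, add_comm]
      simp [Finset.sum_range_succ']

section LpNormOn

variable {ι : Type*} (s : Finset ι)

def lpNormOn (q : ℝ) (a : ι → ℝ) : ℝ :=
  (∑ i ∈ s, |a i| ^ q) ^ (1 / q)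

theorem lpNormOn_nonneg (q : ℝ) (a : ι → ℝ) : 0 ≤ lpNormOn s q a :=
  Real.rpow_nonneg (sum_nonneg fun _ _ => Real.rpow_nonneg (abs_nonneg _) _) _

variable {s}

theorem lpNormOn_mono {q : ℝ} (hq : 0 ≤ q) {a b : ι → ℝ} (h : ∀ i ∈ s, |a i| ≤ b i) :
    lpNormOn s q a ≤ lpNormOn s q b :=
  Real.rpow_le_rpow (sum_nonneg fun _ _ => Real.rpow_nonneg (abs_nonneg _) _)
    (sum_le_sum fun i hi =>
      Real.rpow_le_rpow (abs_nonneg _) ((h i hi).trans (le_abs_self _)) hq)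
    (one_div_nonneg.2 hq)

theorem lpNormOn_add_le {q : ℝ} (hq : 1 ≤ q) (a b : ι → ℝ) :
    lpNormOn s q (fun i => a i + b i) ≤ lpNormOn s q a + lpNormOn s q b :=
  Real.Lp_add_le s a b hq

theorem lpNormOn_const_mul {q : ℝ} (hq : 0 < q) (c : ℝ) (a : ι → ℝ) :
    lpNormOn s q (fun i => c * a i) = |c| * lpNormOn s q a := by
  simp only [lpNormOn, abs_mul, Real.mul_rpow (abs_nonneg _) (abs_nonneg _), ← mul_sum]
  rw [Real.mul_rpow (Real.rpow_nonneg (abs_nonneg c) _)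
      (sum_nonneg fun _ _ => Real.rpow_nonneg (abs_nonneg _) _),
    ← Real.rpow_mul (abs_nonneg c), mul_one_div_cancel hq.ne', Real.rpow_one]

theorem lpNormOn_mul_le {p q r : ℝ} (hpqr : p.HolderTriple q r) (a b : ι → ℝ) :
    lpNormOn s r (fun i => a i * b i) ≤ lpNormOn s p a * lpNormOn s q b := by
  have hA : 0 ≤ ∑ i ∈ s, |a i| ^ p := sum_nonneg fun _ _ => Real.rpow_nonneg (abs_nonneg _) _
  have hB : 0 ≤ ∑ i ∈ s, |b i| ^ q := sum_nonneg fun _ _ => Real.rpow_nonneg (abs_nonneg _) _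
  calc lpNormOn s r (fun i => a i * b i)
      ≤ ((∑ i ∈ s, |a i| ^ p) ^ (r / p) * (∑ i ∈ s, |b i| ^ q) ^ (r / q)) ^ (1 / r) :=
        Real.rpow_le_rpow (sum_nonneg fun _ _ => Real.rpow_nonneg (abs_nonneg _) _)
          (Real.Lr_rpow_le_Lp_mul_Lq s a b hpqr) hpqr.one_div_nonneg'
    _ = lpNormOn s p a * lpNormOn s q b := by
        have hr := hpqr.ne_zero'
        rw [Real.mul_rpow (Real.rpow_nonneg hA _) (Real.rpow_nonneg hB _),
          ← Real.rpow_mul hA, ← Real.rpow_mul hB, lpNormOn, lpNormOn]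
        congr 2 <;> field_simp

theorem lpNormOn_half_le_of_abs_le {p K M : ℝ} (hp : 2 ≤ p) (hK : 0 ≤ K) (hM : 0 ≤ M)
    {ξ a b x y z : ι → ℝ}
    (h : ∀ i ∈ s, |ξ i| ≤ K * (a i + M * b i + M * (y i * y i) + z i * (x i + y i))) :
    lpNormOn s (p / 2) ξ ≤ K * (lpNormOn s (p / 2) a + M * (lpNormOn s (p / 2) b +
      lpNormOn s p y ^ 2) + lpNormOn s p z * (lpNormOn s p x + lpNormOn s p y)) := by
  have hq : 1 ≤ p / 2 := by linarith
  have hq₀ : 0 < p / 2 := by linarith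
  have hpp : p.HolderTriple p (p / 2) := ⟨by rw [inv_div]; ring, by linarith, by linarith⟩
  have hb : lpNormOn s (p / 2) (fun i => M * b i) = M * lpNormOn s (p / 2) b := by
    rw [lpNormOn_const_mul hq₀, abs_of_nonneg hM]
  have hyy : lpNormOn s (p / 2) (fun i => M * (y i * y i)) ≤ M * lpNormOn s p y ^ 2 := by
    rw [lpNormOn_const_mul hq₀, abs_of_nonneg hM, sq]
    exact mul_le_mul_of_nonneg_left (lpNormOn_mul_le hpp y y) hM
  have hzxy : lpNormOn s (p / 2) (fun i => z i * (x i + y i)) ≤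
      lpNormOn s p z * (lpNormOn s p x + lpNormOn s p y) :=
    (lpNormOn_mul_le hpp _ _).trans (mul_le_mul_of_nonneg_left
      (lpNormOn_add_le (by linarith) x y) (lpNormOn_nonneg _ _ _))
  calc lpNormOn s (p / 2) ξ
      ≤ lpNormOn s (p / 2) (fun i => K * (a i + M * b i + M * (y i * y i) + z i * (x i + y i))) :=
        lpNormOn_mono hq₀.le h
    _ = K * lpNormOn s (p / 2) (fun i => a i + M * b i + M * (y i * y i) + z i * (x i + y i)) := by
        rw [lpNormOn_const_mul hq₀, abs_of_nonneg hK]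
    _ ≤ K * (lpNormOn s (p / 2) a + M * (lpNormOn s (p / 2) b + lpNormOn s p y ^ 2) +
          lpNormOn s p z * (lpNormOn s p x + lpNormOn s p y)) := by
        gcongr
        linarith [lpNormOn_add_le (s := s) hq (fun i => a i + M * b i + M * (y i * y i))
            (fun i => z i * (x i + y i)),
          lpNormOn_add_le (s := s) hq (fun i => a i + M * b i) (fun i => M * (y i * y i)),
          lpNormOn_add_le (s := s) hq a (fun i => M * b i)]

end LpNormOn

section PVar

variable {E : Type*} [NormedAddCommGroup E] {p : ℝ} {Ξ : ℕ → ℕ → E} {k l : ℕ}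

theorem pVarSum_nonneg (p : ℝ) (Ξ : ℕ → ℕ → E) (k l : ℕ) : 0 ≤ pVarSum p Ξ k l :=
  Real.sSup_nonneg fun _ ⟨_, _, hx⟩ => hx ▸ List.sum_nonneg fun _ hz => by
    obtain ⟨_, _, rfl⟩ := List.mem_map.mp hz
    exact Real.rpow_nonneg (norm_nonneg _) _

theorem pVar_nonneg (p : ℝ) (Ξ : ℕ → ℕ → E) (k l : ℕ) : 0 ≤ pVar p Ξ k l :=
  Real.rpow_nonneg (pVarSum_nonneg p Ξ k l) _

theorem sum_rpow_le_pVarSum {s : List ℕ} (hs : IsPart k l s) :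
    ∑ i ∈ range (s.length - 1), ‖Ξ (s.getD i 0) (s.getD (i + 1) 0)‖ ^ p ≤ pVarSum p Ξ k l := by
  refine le_csSup ?_ ⟨s, hs, (List.sum_map_zip_tail_eq_sum_range (fun a b => ‖Ξ a b‖ ^ p) 0 s).symm⟩
  -- every increment of a partition of `[k, l]` is one of the finitely many `Ξ a b`, `a, b ≤ l`
  set B := ∑ ab ∈ range (l + 1) ×ˢ range (l + 1), ‖Ξ ab.1 ab.2‖ ^ p
  refine ⟨l * B, ?_⟩
  rintro _ ⟨t, ht, rfl⟩
  rw [List.sum_map_zip_tail_eq_sum_range (fun a b => ‖Ξ a b‖ ^ p) 0 t]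
  have hterm : ∀ i ∈ range (t.length - 1), ‖Ξ (t.getD i 0) (t.getD (i + 1) 0)‖ ^ p ≤ B :=
    fun i _ => single_le_sum (f := fun ab : ℕ × ℕ => ‖Ξ ab.1 ab.2‖ ^ p)
      (fun _ _ => Real.rpow_nonneg (norm_nonneg _) _) (a := (t.getD i 0, t.getD (i + 1) 0))
      (mem_product.2 ⟨mem_range.2 (Nat.lt_succ_of_le (ht.getD_le _)),
        mem_range.2 (Nat.lt_succ_of_le (ht.getD_le _))⟩)
  have hB : 0 ≤ B := sum_nonneg fun _ _ => Real.rpow_nonneg (norm_nonneg _) _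
  calc _ ≤ #(range (t.length - 1)) • B := sum_le_card_nsmul _ _ _ hterm
    _ ≤ l * B := by
      rw [card_range, nsmul_eq_mul]
      exact mul_le_mul_of_nonneg_right (by have := ht.length_le; norm_cast; omega) hB

theorem lpNormOn_le_pVar (hp : 0 < p) {s : List ℕ} (hs : IsPart k l s) :
    lpNormOn (range (s.length - 1)) p (fun i => ‖Ξ (s.getD i 0) (s.getD (i + 1) 0)‖) ≤
      pVar p Ξ k l := by
  simp only [lpNormOn, abs_norm]
  exact Real.rpow_le_rpow (sum_nonneg fun _ _ => Real.rpow_nonneg (norm_nonneg _) _)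
    (sum_rpow_le_pVarSum hs) (one_div_nonneg.2 hp.le)

theorem pVarSeq_nonneg (p : ℝ) (x : ℕ → E) (k l : ℕ) : 0 ≤ pVarSeq p x k l :=
  pVar_nonneg p _ k l

theorem lpNormOn_le_pVarSeq (hp : 0 < p) {x : ℕ → E} {s : List ℕ} (hs : IsPart k l s) :
    lpNormOn (range (s.length - 1)) p (fun i => ‖x (s.getD (i + 1) 0) - x (s.getD i 0)‖) ≤
      pVarSeq p x k l :=
  lpNormOn_le_pVar (Ξ := fun a b => x b - x a) hp hs

theorem pVar_le_of_forall_isPart (hp : 0 < p) {C : ℝ} (hC : 0 ≤ C)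
    (h : ∀ s, IsPart k l s →
      lpNormOn (range (s.length - 1)) p (fun i => ‖Ξ (s.getD i 0) (s.getD (i + 1) 0)‖) ≤ C) :
    pVar p Ξ k l ≤ C := by
  rw [pVar, one_div, Real.rpow_inv_le_iff_of_pos (pVarSum_nonneg p Ξ k l) hC hp]
  refine Real.sSup_le ?_ (Real.rpow_nonneg hC p)
  rintro _ ⟨s, hs, rfl⟩
  have hs' := h s hs
  simp only [lpNormOn, abs_norm, one_div] at hs'
  rw [List.sum_map_zip_tail_eq_sum_range (fun a b => ‖Ξ a b‖ ^ p) 0 s, ← Real.rpow_inv_le_iff_of_pos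
    (sum_nonneg fun _ _ => Real.rpow_nonneg (norm_nonneg _) _) hC hp]
  exact hs'

end PVar

theorem pVar_half_le_of_norm_le {E F G H : Type*} [NormedAddCommGroup E] [NormedAddCommGroup F]
    [NormedAddCommGroup G] [NormedAddCommGroup H] {p K M : ℝ} (hp : 2 ≤ p) (hK : 0 ≤ K)
    (hM : 0 ≤ M) {Ξ : ℕ → ℕ → E} {A : ℕ → ℕ → F} {B : ℕ → ℕ → G} {x y z : ℕ → H} {k l : ℕ}
    (h : ∀ u v, u ≤ l → v ≤ l → ‖Ξ u v‖ ≤ K * (‖A u v‖ + M * ‖B u v‖ +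
      M * (‖y v - y u‖ * ‖y v - y u‖) + ‖z v - z u‖ * (‖x v - x u‖ + ‖y v - y u‖))) :
    pVar (p / 2) Ξ k l ≤ K * (pVar (p / 2) A k l + M * (pVar (p / 2) B k l + pVarSeq p y k l ^ 2) +
      pVarSeq p z k l * (pVarSeq p x k l + pVarSeq p y k l)) := by
  have hp₀ : 0 < p := by linarith
  have hq₀ : 0 < p / 2 := by linarith
  have hx := pVarSeq_nonneg p x k l
  have hy := pVarSeq_nonneg p y k l
  have hz := pVarSeq_nonneg p z k l
  have hA := pVar_nonneg (p / 2) A k l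
  have hB := pVar_nonneg (p / 2) B k l
  refine pVar_le_of_forall_isPart hq₀ (by positivity) fun s hs => ?_
  refine (lpNormOn_half_le_of_abs_le hp hK hM
    (a := fun i => ‖A (s.getD i 0) (s.getD (i + 1) 0)‖)
    (b := fun i => ‖B (s.getD i 0) (s.getD (i + 1) 0)‖)
    (x := fun i => ‖x (s.getD (i + 1) 0) - x (s.getD i 0)‖)
    (y := fun i => ‖y (s.getD (i + 1) 0) - y (s.getD i 0)‖)
    (z := fun i => ‖z (s.getD (i + 1) 0) - z (s.getD i 0)‖) fun i _ => ?_).trans ?_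
  · rw [abs_norm]
    exact h _ _ (hs.getD_le _) (hs.getD_le _)
  · have hxs := lpNormOn_le_pVarSeq (x := x) hp₀ hs
    have hys := lpNormOn_le_pVarSeq (x := y) hp₀ hs
    have hzs := lpNormOn_le_pVarSeq (x := z) hp₀ hs
    have hAs := lpNormOn_le_pVar (Ξ := A) hq₀ hs
    have hBs := lpNormOn_le_pVar (Ξ := B) hq₀ hs
    have hy₀ := lpNormOn_nonneg (range (s.length - 1)) p
      (fun i => ‖y (s.getD (i + 1) 0) - y (s.getD i 0)‖)
    gcongr
    exact add_nonneg (lpNormOn_nonneg _ _ _) hy₀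

section Calculus

variable {E F : Type*} [NormedAddCommGroup E] [NormedSpace ℝ E] [NormedAddCommGroup F]
  [NormedSpace ℝ F]

theorem norm_sub_le_of_forall_norm_fderiv_le {G : E → F} {C : ℝ} (hG : Differentiable ℝ G)
    (h : ∀ y, ‖fderiv ℝ G y‖ ≤ C) (y z : E) : ‖G y - G z‖ ≤ C * ‖y - z‖ :=
  convex_univ.norm_image_sub_le_of_norm_fderiv_le (fun c _ => hG c) (fun c _ => h c) trivial
    trivial

theorem hasDerivAt_comp_add_smul {G : E → F} (hG : Differentiable ℝ G) (a h : E) (v : ℝ) :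
    HasDerivAt (fun t : ℝ => G (a + t • h)) (fderiv ℝ G (a + v • h) h) v :=
  (hG _).hasFDerivAt.comp_hasDerivAt v
    (by simpa using ((hasDerivAt_id v).smul_const h).const_add a)

theorem norm_smul_le_of_mem_Icc {v : ℝ} (hv : v ∈ Set.Icc (0 : ℝ) 1) (w : E) :
    ‖v • w‖ ≤ ‖w‖ := by
  rw [norm_smul, Real.norm_of_nonneg hv.1]
  exact mul_le_of_le_one_left (norm_nonneg w) hv.2

theorem norm_add_smul_sub_add_smul_le {a b a' b' : E} {M v : ℝ} (ha : ‖a - a'‖ ≤ M)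
    (hb : ‖b - b'‖ ≤ M) (hv : v ∈ Set.Icc (0 : ℝ) 1) :
    ‖(a + v • (b - a)) - (a' + v • (b' - a'))‖ ≤ M := by
  have key : (a + v • (b - a)) - (a' + v • (b' - a')) = (1 - v) • (a - a') + v • (b - b') := by
    module
  rw [key, ← mem_closedBall_zero_iff]
  exact convex_closedBall (0 : E) M (mem_closedBall_zero_iff.2 ha) (mem_closedBall_zero_iff.2 hb)
    (by linarith [hv.2]) hv.1 (by ring)

theorem norm_fderiv_fderiv_eq (G : E → F) (y : E) :
    ‖fderiv ℝ (fderiv ℝ G) y‖ = ‖iteratedFDeriv ℝ 2 G y‖ := by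
  rw [← norm_iteratedFDeriv_one, norm_iteratedFDeriv_fderiv]

theorem norm_sub_sub_sub_le_of_contDiff {G : E → F} {K₁ K₂ M : ℝ} (hG : ContDiff ℝ 2 G)
    (h₁ : ∀ y, ‖fderiv ℝ G y‖ ≤ K₁) (h₂ : ∀ y, ‖iteratedFDeriv ℝ 2 G y‖ ≤ K₂)
    {a b a' b' : E} (ha : ‖a - a'‖ ≤ M) (hb : ‖b - b'‖ ≤ M) :
    ‖(G b - G a) - (G b' - G a')‖ ≤ K₁ * ‖(b - b') - (a - a')‖ + K₂ * M * ‖b' - a'‖ := by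
  have hG₁ : Differentiable ℝ G := hG.differentiable (by norm_num)
  have hG₂ : Differentiable ℝ (fderiv ℝ G) :=
    (hG.fderiv_right (m := 1) (by norm_num)).differentiable one_ne_zero
  have hK₂ : 0 ≤ K₂ := (norm_nonneg _).trans (h₂ 0)
  set h := b - a
  set h' := b' - a'
  have hderiv : ∀ v ∈ Set.Icc (0 : ℝ) 1,
      HasDerivWithinAt (fun t : ℝ => G (a + t • h) - G (a' + t • h'))
        (fderiv ℝ G (a + v • h) h - fderiv ℝ G (a' + v • h') h') (Set.Icc 0 1) v :=
    fun v _ => ((hasDerivAt_comp_add_smul hG₁ a h v).sub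
      (hasDerivAt_comp_add_smul hG₁ a' h' v)).hasDerivWithinAt
  have hbound : ∀ v ∈ Set.Ico (0 : ℝ) 1,
      ‖fderiv ℝ G (a + v • h) h - fderiv ℝ G (a' + v • h') h'‖ ≤
        K₁ * ‖h - h'‖ + K₂ * M * ‖h'‖ := by
    intro v hv
    have hM : ‖fderiv ℝ G (a + v • h) - fderiv ℝ G (a' + v • h')‖ ≤ K₂ * M :=
      (norm_sub_le_of_forall_norm_fderiv_le hG₂
        (fun y => (norm_fderiv_fderiv_eq G y).trans_le (h₂ y)) _ _).trans
        (mul_le_mul_of_nonneg_left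
          (norm_add_smul_sub_add_smul_le ha hb (Set.Ico_subset_Icc_self hv)) hK₂)
    calc _ = ‖fderiv ℝ G (a + v • h) (h - h') +
          (fderiv ℝ G (a + v • h) - fderiv ℝ G (a' + v • h')) h'‖ := by
          simp only [map_sub, sub_apply]; abel_nf
      _ ≤ K₁ * ‖h - h'‖ + K₂ * M * ‖h'‖ := norm_add_le_of_le
          ((ContinuousLinearMap.le_opNorm _ _).trans
            (mul_le_mul_of_nonneg_right (h₁ _) (norm_nonneg _)))
          ((ContinuousLinearMap.le_opNorm _ _).trans
            (mul_le_mul_of_nonneg_right hM (norm_nonneg _)))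
  have hmvt := norm_image_sub_le_of_norm_deriv_le_segment_01' hderiv hbound
  have e : a + h = b := add_sub_cancel a b
  have e' : a' + h' = b' := add_sub_cancel a' b'
  simp only [one_smul, zero_smul, add_zero, e, e'] at hmvt
  rw [show (b - b') - (a - a') = (b - a) - (b' - a') by abel,
    show G b - G a - (G b' - G a') = G b - G b' - (G a - G a') by abel]
  exact hmvt

theorem norm_taylor_sub_taylor_le {Φ : E → F} {K₂ K₃ M : ℝ} (hΦ : ContDiff ℝ 3 Φ)
    (h₂ : ∀ y, ‖iteratedFDeriv ℝ 2 Φ y‖ ≤ K₂) (h₃ : ∀ y, ‖iteratedFDeriv ℝ 3 Φ y‖ ≤ K₃)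
    {a b a' b' : E} (ha : ‖a - a'‖ ≤ M) (hb : ‖b - b'‖ ≤ M) :
    ‖(Φ b - Φ a - fderiv ℝ Φ a (b - a)) - (Φ b' - Φ a' - fderiv ℝ Φ a' (b' - a'))‖ ≤
      K₂ * ‖(b - b') - (a - a')‖ * (‖b - a‖ + ‖b' - a'‖) + K₃ * M * (‖b' - a'‖ * ‖b' - a'‖) := by
  have hΦ₁ : Differentiable ℝ Φ := hΦ.differentiable (by norm_num)
  have hΦ' : ContDiff ℝ 2 (fderiv ℝ Φ) := hΦ.fderiv_right (by norm_num)
  have hD₂ : ∀ y, ‖fderiv ℝ (fderiv ℝ Φ) y‖ ≤ K₂ := fun y =>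
    (norm_fderiv_fderiv_eq Φ y).trans_le (h₂ y)
  have hK₂ : 0 ≤ K₂ := (norm_nonneg _).trans (h₂ 0)
  set h := b - a
  set h' := b' - a'
  set L := fderiv ℝ Φ a h - fderiv ℝ Φ a' h'
  have hderiv : ∀ v ∈ Set.Icc (0 : ℝ) 1,
      HasDerivWithinAt (fun t : ℝ => Φ (a + t • h) - Φ (a' + t • h') - t • L)
        (fderiv ℝ Φ (a + v • h) h - fderiv ℝ Φ (a' + v • h') h' - L) (Set.Icc 0 1) v :=
    fun v _ => (((hasDerivAt_comp_add_smul hΦ₁ a h v).sub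
      (hasDerivAt_comp_add_smul hΦ₁ a' h' v)).sub
      (by simpa using (hasDerivAt_id v).smul_const L)).hasDerivWithinAt
  have hbound : ∀ v ∈ Set.Ico (0 : ℝ) 1,
      ‖fderiv ℝ Φ (a + v • h) h - fderiv ℝ Φ (a' + v • h') h' - L‖ ≤
        K₂ * ‖h - h'‖ * (‖h‖ + ‖h'‖) + K₃ * M * (‖h'‖ * ‖h'‖) := by
    intro v hv
    have hv' := Set.Ico_subset_Icc_self hv
    have hX : ‖(fderiv ℝ Φ (a + v • h) - fderiv ℝ Φ a) (h - h')‖ ≤ K₂ * ‖h‖ * ‖h - h'‖ := by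
      refine (ContinuousLinearMap.le_opNorm _ _).trans
        (mul_le_mul_of_nonneg_right ?_ (norm_nonneg _))
      refine (norm_sub_le_of_forall_norm_fderiv_le (hΦ'.differentiable (by norm_num)) hD₂
        _ _).trans ?_
      rw [add_sub_cancel_left]
      exact mul_le_mul_of_nonneg_left (norm_smul_le_of_mem_Icc hv' h) hK₂
    have hY : ‖((fderiv ℝ Φ (a + v • h) - fderiv ℝ Φ a) -
        (fderiv ℝ Φ (a' + v • h') - fderiv ℝ Φ a')) h'‖ ≤
          (K₂ * ‖h - h'‖ + K₃ * M * ‖h'‖) * ‖h'‖ := by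
      refine (ContinuousLinearMap.le_opNorm _ _).trans
        (mul_le_mul_of_nonneg_right ?_ (norm_nonneg _))
      refine (norm_sub_sub_sub_le_of_contDiff hΦ' hD₂
        (fun y => (norm_iteratedFDeriv_fderiv (n := 2)).trans_le (h₃ y)) ha
        (norm_add_smul_sub_add_smul_le ha hb hv')).trans ?_
      rw [show a + v • h - (a' + v • h') - (a - a') = v • (h - h') by module, add_sub_cancel_left]
      have hK₃M : 0 ≤ K₃ * M :=
        mul_nonneg ((norm_nonneg _).trans (h₃ 0)) ((norm_nonneg _).trans ha)
      gcongr
      · exact norm_smul_le_of_mem_Icc hv' _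
      · exact norm_smul_le_of_mem_Icc hv' _
    calc _ = ‖(fderiv ℝ Φ (a + v • h) - fderiv ℝ Φ a) (h - h') +
          ((fderiv ℝ Φ (a + v • h) - fderiv ℝ Φ a) -
            (fderiv ℝ Φ (a' + v • h') - fderiv ℝ Φ a')) h'‖ := by
          simp only [L, map_sub, sub_apply]; abel_nf
      _ ≤ K₂ * ‖h‖ * ‖h - h'‖ + (K₂ * ‖h - h'‖ + K₃ * M * ‖h'‖) * ‖h'‖ := norm_add_le_of_le hX hY
      _ = _ := by ring
  have hmvt := norm_image_sub_le_of_norm_deriv_le_segment_01' hderiv hbound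
  have e : a + h = b := add_sub_cancel a b
  have e' : a' + h' = b' := add_sub_cancel a' b'
  simp only [one_smul, zero_smul, add_zero, e, e'] at hmvt
  rw [show (b - b') - (a - a') = (b - a) - (b' - a') by abel]
  calc _ = _ := by simp only [L]; abel_nf
    _ ≤ _ := hmvt

theorem norm_remainder_sub_remainder_le {Φ : E → F} {K M : ℝ} (hΦ : ContDiff ℝ 3 Φ)
    (hK : ∀ j, 1 ≤ j → j ≤ 3 → ∀ y, ‖iteratedFDeriv ℝ j Φ y‖ ≤ K) {a b a' b' i i' : E}
    (ha : ‖a - a'‖ ≤ M) (hb : ‖b - b'‖ ≤ M) :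
    ‖(Φ b - Φ a - fderiv ℝ Φ a (b - a - i)) - (Φ b' - Φ a' - fderiv ℝ Φ a' (b' - a' - i'))‖ ≤
      K * (‖i - i'‖ + M * ‖i'‖ + M * (‖b' - a'‖ * ‖b' - a'‖) +
        ‖(b - b') - (a - a')‖ * (‖b - a‖ + ‖b' - a'‖)) := by
  have h₁ : ∀ y, ‖fderiv ℝ Φ y‖ ≤ K := fun y => by
    simpa using hK 1 le_rfl (by norm_num) y
  have h₂ : ∀ y, ‖iteratedFDeriv ℝ 2 Φ y‖ ≤ K := hK 2 (by norm_num) (by norm_num)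
  have h₃ : ∀ y, ‖iteratedFDeriv ℝ 3 Φ y‖ ≤ K := hK 3 (by norm_num) le_rfl
  have hK₀ : 0 ≤ K := (norm_nonneg _).trans (h₁ 0)
  have hDΦ : ‖fderiv ℝ Φ a - fderiv ℝ Φ a'‖ ≤ K * M :=
    (norm_sub_le_of_forall_norm_fderiv_le
      ((hΦ.fderiv_right (m := 2) (by norm_num)).differentiable (by norm_num))
      (fun y => (norm_fderiv_fderiv_eq Φ y).trans_le (h₂ y)) a a').trans
      (mul_le_mul_of_nonneg_left ha hK₀)
  calc _ = ‖((Φ b - Φ a - fderiv ℝ Φ a (b - a)) - (Φ b' - Φ a' - fderiv ℝ Φ a' (b' - a'))) +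
        (fderiv ℝ Φ a (i - i') + (fderiv ℝ Φ a - fderiv ℝ Φ a') i')‖ := by
        simp only [map_sub, sub_apply]; abel_nf
    _ ≤ (K * ‖(b - b') - (a - a')‖ * (‖b - a‖ + ‖b' - a'‖) + K * M * (‖b' - a'‖ * ‖b' - a'‖)) +
        (K * ‖i - i'‖ + K * M * ‖i'‖) :=
      norm_add_le_of_le (norm_taylor_sub_taylor_le hΦ h₂ h₃ ha hb) (norm_add_le_of_le
        ((ContinuousLinearMap.le_opNorm _ _).trans
          (mul_le_mul_of_nonneg_right (h₁ a) (norm_nonneg _)))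
        ((ContinuousLinearMap.le_opNorm _ _).trans
          (mul_le_mul_of_nonneg_right hDΦ (norm_nonneg _))))
    _ = _ := by ring

end Calculus

theorem norm_iteratedFDeriv_le_C3bNormF {d n : ℕ} {f : Fin d → (Fin n → ℝ) → (Fin n → ℝ)}
    (hfb : ∀ μ, ∀ j : ℕ, j ≤ 3 → ∃ C : ℝ, ∀ y, ‖iteratedFDeriv ℝ j (f μ) y‖ ≤ C) (μ : Fin d)
    (j : ℕ) (hj₁ : 1 ≤ j) (hj₃ : j ≤ 3) (y : Fin n → ℝ) :
    ‖iteratedFDeriv ℝ j (f μ) y‖ ≤ C3bNormF f := by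
  have hsup : ‖iteratedFDeriv ℝ j (f μ) y‖ ≤ ⨆ ν, ⨆ z, ‖iteratedFDeriv ℝ j (f ν) z‖ := by
    obtain ⟨C, hC⟩ := hfb μ j hj₃
    exact (le_ciSup ⟨C, Set.forall_mem_range.2 hC⟩ y).trans
      (le_ciSup (f := fun ν => ⨆ z, ‖iteratedFDeriv ℝ j (f ν) z‖) (Set.finite_range _).bddAbove μ)
  unfold C3bNormF
  interval_cases j
  · exact hsup.trans (le_max_left _ _)
  · exact hsup.trans ((le_max_left _ _).trans (le_max_right _ _))
  · exact hsup.trans ((le_max_right _ _).trans (le_max_right _ _))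

/-- Bound on the `p/2`-variation of the difference of the rough-regime remainders `J`
and `J̃` associated with two solutions. -/
theorem rough_J_diff_bound (d n N : ℕ) (p : ℝ) (hp1 : 2 ≤ p)
    (f : Fin d → (Fin n → ℝ) → (Fin n → ℝ))
    (hf : ∀ μ, ContDiff ℝ 3 (f μ))
    (hfb : ∀ μ, ∀ j : ℕ, j ≤ 3 → ∃ C : ℝ, ∀ y, ‖iteratedFDeriv ℝ j (f μ) y‖ ≤ C)
    (w w' : ℕ → Fin d → ℝ) (x x' : ℕ → Fin n → ℝ)
    (I I' : ℕ → ℕ → Fin n → ℝ)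
    (hI : ∀ k l, I k l = x l - x k - ∑ μ : Fin d, (w l μ - w k μ) • f μ (x k))
    (hI' : ∀ k l, I' k l = x' l - x' k - ∑ μ : Fin d, (w' l μ - w' k μ) • f μ (x' k))
    (J J' : Fin d → ℕ → ℕ → Fin n → ℝ)
    (hJ : ∀ μ k l, J μ k l = f μ (x l) - f μ (x k) -
      ∑ ν : Fin d, (w l ν - w k ν) • fderiv ℝ (f μ) (x k) (f ν (x k)))
    (hJ' : ∀ μ k l, J' μ k l = f μ (x' l) - f μ (x' k) -
      ∑ ν : Fin d, (w' l ν - w' k ν) • fderiv ℝ (f μ) (x' k) (f ν (x' k))) :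
    ∀ k l : ℕ, k < l → l ≤ N → ∀ μ : Fin d,
      pVar (p / 2) (fun a b => J μ a b - J' μ a b) k l ≤
        2 ^ (2 - 4 / p) * C3bNormF f *
          (pVar (p / 2) (fun a b => I a b - I' a b) k l +
            ((Finset.Icc 0 l).sup' ⟨0, by simp⟩ fun j => ‖x j - x' j‖) *
              (pVar (p / 2) I' k l + pVarSeq p x' k l ^ 2) +
            pVarSeq p (fun j => x j - x' j) k l *
              (pVarSeq p x k l + pVarSeq p x' k l)) := by
  intro k l _ _ μ
  set M := (Finset.Icc 0 l).sup' ⟨0, by simp⟩ fun j => ‖x j - x' j‖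
  have hxM : ∀ j ≤ l, ‖x j - x' j‖ ≤ M := fun j hj =>
    le_sup' (fun j => ‖x j - x' j‖) (mem_Icc.2 ⟨j.zero_le, hj⟩)
  have hM : 0 ≤ M := (norm_nonneg _).trans (hxM 0 l.zero_le)
  have hfK := norm_iteratedFDeriv_le_C3bNormF hfb μ
  have hK : 0 ≤ C3bNormF f := (norm_nonneg _).trans (hfK 1 le_rfl (by norm_num) 0)
  -- `∑ ν, (w_l^ν - w_k^ν) f_ν(x_k) = x_l - x_k - I_{k,l}`, so `J` is a Taylor remainder of `f μ`
  -- up to a term linear in `I`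
  have hJx : ∀ u v, J μ u v = f μ (x v) - f μ (x u) - fderiv ℝ (f μ) (x u) (x v - x u - I u v) :=
    fun u v => by simp only [hJ, hI, map_sum, map_smul, sub_sub_cancel]
  have hJx' : ∀ u v,
      J' μ u v = f μ (x' v) - f μ (x' u) - fderiv ℝ (f μ) (x' u) (x' v - x' u - I' u v) :=
    fun u v => by simp only [hJ', hI', map_sum, map_smul, sub_sub_cancel]
  have hvar := pVar_half_le_of_norm_le hp1 hK hM
    (Ξ := fun a b => J μ a b - J' μ a b) (A := fun a b => I a b - I' a b) (B := I')
    (x := x) (y := x') (z := fun j => x j - x' j) (k := k) fun u v hu hv => by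
      rw [hJx, hJx']
      exact norm_remainder_sub_remainder_le (hf μ) hfK (hxM u hu) (hxM v hv)
  refine hvar.trans ?_
  rw [mul_assoc]
  refine le_mul_of_one_le_left (mul_nonneg hK ?_) (Real.one_le_rpow one_le_two ?_)
  · exact add_nonneg (add_nonneg (pVar_nonneg _ _ _ _) (mul_nonneg hM (add_nonneg
      (pVar_nonneg _ _ _ _) (sq_nonneg _)))) (mul_nonneg (pVarSeq_nonneg _ _ _ _)
      (add_nonneg (pVarSeq_nonneg _ _ _ _) (pVarSeq_nonneg _ _ _ _)))
  · rw [sub_nonneg, div_le_iff₀ (by linarith)]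
    linarith
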